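/- Let S = {z^q + 1 : q an odd prime} and suppose P ∈ ℚ satisfies H(P) > 4. Then for every nonempty finite list L of elements of S, h(L(P)) > h(P) + log 2; in particular L(P) ≠ P, so P is not periodic under any nontrivial composition of elements of S. -/

import Mathlib

open Polynomial

/-- Multiplicative Weil height of a rational number: `H(p/q) = max(|p|, q)`. -/
noncomputable def ratH (x : ℚ) : ℝ := max |(x.num : ℝ)| (x.den : ℝ)

/-- Logarithmic Weil height of a rational number. -/
noncomputable def rath (x : ℚ) : ℝ := Real.log (ratH x)

/-- Evaluation of a finite list of polynomials `[φ₁, …, φₘ]` at `P`: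
`φ₁(φ₂(⋯φₘ(P)⋯))`, the empty list acting as the identity. -/
def applyList (L : List (Polynomial ℚ)) (P : ℚ) : ℚ :=
  L.foldr (fun φ x => φ.eval x) P

lemma gcd_add_den (a b : ℤ) : Int.gcd (a + b) b = Int.gcd a b := by
  apply Nat.dvd_antisymm
  · rw [← Int.natCast_dvd_natCast]
    refine Int.dvd_coe_gcd ?_ (Int.gcd_dvd_right _ _)
    have := dvd_sub (Int.gcd_dvd_left (a := a+b) (b := b)) (Int.gcd_dvd_right (a := a+b) (b := b))
    simpa using this
  · rw [← Int.natCast_dvd_natCast]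
    refine Int.dvd_coe_gcd ?_ (Int.gcd_dvd_right _ _)
    exact dvd_add (Int.gcd_dvd_left _ _) (Int.gcd_dvd_right _ _)

lemma add_one_eq (r : ℚ) : (r + 1).num = r.num + r.den ∧ (r + 1).den = r.den := by
  set s : ℚ := ⟨r.num + r.den, r.den, r.den_nz, by
    have : Int.gcd (r.num + r.den) r.den = 1 := by
      rw [gcd_add_den]; exact r.reduced
    simpa [Int.gcd] using this⟩ with hs
  have hden : (r.den : ℚ) ≠ 0 := by exact_mod_cast r.den_nz
  have h : r + 1 = s := by
    rw [← Rat.num_div_den s]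
    have hn : s.num = r.num + r.den := rfl
    have hd : s.den = r.den := rfl
    rw [hn, hd]
    push_cast
    rw [add_div, Rat.num_div_den, div_self hden]
  rw [h]; exact ⟨rfl, rfl⟩

lemma ratH_one_le (x : ℚ) : 1 ≤ ratH x := by
  unfold ratH
  have : (1:ℝ) ≤ (x.den:ℝ) := by exact_mod_cast x.pos
  exact le_max_of_le_right this

lemma step (x : ℚ) (n : ℕ) (hn : 3 ≤ n) :
    (ratH x)^2 ≤ ratH (x^n + 1) := by
  have hnum : ((x^n + 1).num : ℝ) = (x.num:ℝ)^n + (x.den:ℝ)^n := by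
    rw [(add_one_eq (x^n)).1, Rat.num_pow, Rat.den_pow]; push_cast; ring
  have hden : ((x^n + 1).den : ℝ) = (x.den:ℝ)^n := by
    rw [(add_one_eq (x^n)).2, Rat.den_pow]; push_cast; ring
  set A : ℝ := |(x.num:ℝ)| with hA
  set B : ℝ := (x.den:ℝ) with hB
  have hB1 : (1:ℝ) ≤ B := by rw [hB]; exact_mod_cast x.pos
  have hAn : A = (x.num.natAbs : ℝ) := by rw [hA, Nat.cast_natAbs]; push_cast; ring
  have hA0 : 0 ≤ A := abs_nonneg _
  unfold ratH
  rw [hnum, hden]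
  rcases le_or_gt A B with h | h
  · -- denominator dominates
    rw [max_eq_right h]
    refine le_trans ?_ (le_max_right _ _)
    calc B^2 ≤ B^n := pow_le_pow_right₀ hB1 (by omega)
    _ = B^n := rfl
  · -- numerator dominates: B + 1 ≤ A
    rw [max_eq_left h.le]
    have hBA : B + 1 ≤ A := by
      have hlt : x.den < x.num.natAbs := by
        by_contra hc
        push_neg at hc
        have : A ≤ B := by
          rw [hAn, hB]; exact_mod_cast hc
        linarith
      have h2 : ((x.den:ℝ)) + 1 ≤ (x.num.natAbs : ℝ) := by exact_mod_cast hlt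
      rw [hAn, hB]; exact h2
    refine le_trans ?_ (le_max_left _ _)
    -- |p^n + B^n| ≥ A^n - B^n ≥ A^(n-1) ≥ A^2
    have habs : A^n - B^n ≤ |(x.num:ℝ)^n + B^n| := by
      have h1 : A^n = |(x.num:ℝ)^n| := by rw [hA, ← abs_pow]
      have h2 : |(x.num:ℝ)^n| = |((x.num:ℝ)^n + B^n) - B^n| := by ring_nf
      have h3 : |((x.num:ℝ)^n + B^n) - B^n| ≤ |(x.num:ℝ)^n + B^n| + |B^n| := abs_sub _ _
      have h4 : |B^n| = B^n := abs_of_nonneg (by positivity)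
      linarith [h1, h2 ▸ h1, h3, h4]
    refine le_trans ?_ habs
    obtain ⟨m, rfl⟩ : ∃ m, n = m + 1 := ⟨n - 1, by omega⟩
    have hm2 : 2 ≤ m := by omega
    have hA1 : (1:ℝ) ≤ A := by linarith
    have hBm : B^m ≤ A^m := pow_le_pow_left₀ (by linarith) (by linarith) m
    have key : A^m ≤ A^(m+1) - B^(m+1) := by
      have : B^(m+1) = B^m * B := by ring
      have h5 : A^(m+1) = A^m * A := by ring
      have h6 : B^m * B ≤ A^m * B := by nlinarith
      nlinarith [pow_nonneg (show (0:ℝ) ≤ A from hA0) m]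
    have hA2m : A^2 ≤ A^m := pow_le_pow_right₀ hA1 hm2
    linarith

lemma iterH (P : ℚ) (hP : 4 < ratH P) :
    ∀ L : List (Polynomial ℚ),
      (∀ φ ∈ L, ∃ q : ℕ, Nat.Prime q ∧ Odd q ∧ φ = X ^ q + 1) →
      2 ^ L.length * ratH P ≤ ratH (applyList L P) := by
  intro L
  induction L with
  | nil => intro _; simp [applyList]
  | cons φ L ih =>
    intro hmem
    have hy := ih (fun ψ hψ => hmem ψ (List.mem_cons_of_mem _ hψ))
    set y := applyList L P with hy'
    have hpow : (1:ℝ) ≤ 2 ^ L.length := one_le_pow₀ (by norm_num)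
    have hy4 : 4 < ratH y := by nlinarith
    obtain ⟨q, hq, hodd, hφ⟩ := hmem φ List.mem_cons_self
    have hq3 : 3 ≤ q := by
      have h2 := hq.two_le
      have hne2 : q ≠ 2 := by rintro rfl; exact (by decide : ¬ Odd 2) hodd
      omega
    have heval : applyList (φ :: L) P = y ^ q + 1 := by
      show φ.eval y = y ^ q + 1
      rw [hφ]; simp
    rw [heval]
    have hstep := step y q hq3
    have : (2:ℝ) ^ (φ :: L).length = 2 * 2 ^ L.length := by
      simp [pow_succ]; ring
    rw [this]
    nlinarith [hstep, hy4, hy]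

theorem stmt18 (S : Set (Polynomial ℚ))
    (hS : S = {φ : Polynomial ℚ | ∃ q : ℕ, Nat.Prime q ∧ Odd q ∧ φ = X ^ q + 1})
    (P : ℚ) (hP : ratH P > 4) :
    ∀ L : List (Polynomial ℚ), L ≠ [] → (∀ φ ∈ L, φ ∈ S) →
      rath (applyList L P) > rath P + Real.log 2 ∧ applyList L P ≠ P := by
  intro L hne hmem
  have hmem' : ∀ φ ∈ L, ∃ q : ℕ, Nat.Prime q ∧ Odd q ∧ φ = X ^ q + 1 := by
    intro φ hφ
    have := hmem φ hφ
    rwa [hS] at this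
  obtain ⟨φ, L', rfl⟩ : ∃ φ L', L = φ :: L' := by
    cases L with
    | nil => exact absurd rfl hne
    | cons a l => exact ⟨a, l, rfl⟩
  set y := applyList L' P with hy'
  have hy := iterH P hP L' (fun ψ hψ => hmem' ψ (List.mem_cons_of_mem _ hψ))
  have hpow : (1:ℝ) ≤ 2 ^ L'.length := one_le_pow₀ (by norm_num)
  have hy4 : 4 < ratH y := by nlinarith
  obtain ⟨q, hq, hodd, hφ⟩ := hmem' φ List.mem_cons_self
  have hq3 : 3 ≤ q := by
    have h2 := hq.two_le
    have hne2 : q ≠ 2 := by rintro rfl; exact (by decide : ¬ Odd 2) hodd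
    omega
  have heval : applyList (φ :: L') P = y ^ q + 1 := by
    show φ.eval y = y ^ q + 1
    rw [hφ]; simp
  rw [heval]
  have hstep := step y q hq3
  have hkey : 2 * ratH P < ratH (y ^ q + 1) := by nlinarith
  have hP0 : (0:ℝ) < ratH P := by linarith
  have hlog : rath (y ^ q + 1) > rath P + Real.log 2 := by
    unfold rath
    have h2P : (0:ℝ) < 2 * ratH P := by linarith
    calc Real.log (ratH P) + Real.log 2 = Real.log (2 * ratH P) := by
          rw [Real.log_mul (by norm_num) (ne_of_gt hP0)]; ring
    _ < Real.log (ratH (y ^ q + 1)) := Real.log_lt_log h2P hkey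
  refine ⟨hlog, ?_⟩
  intro heq
  rw [heq] at hlog
  have := Real.log_pos (by norm_num : (1:ℝ) < 2)
  unfold rath at hlog
  linarith
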